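/- arXiv:1706.04392 — 3 statements merged into one kernel-verified Lean document; each statement's English description precedes it below -/
import Mathlib

section
/- Over a finite field F_q of characteristic 2, there is no dynamically irreducible quadratic polynomial; i.e., for every quadratic f ∈ F_q[X] there exists n ≥ 1 such that f^(n) is reducible over F_q. -/
/-!
If `f ∘ f` is reducible we are done, so let `K = F[X]/(f ∘ f)`, the degree-4 extension of `F`
generated by a root `β` of `f ∘ f`. In characteristic 2, `f ∘ f = a f² + b f + c` has no `X³`-term
because `f²` has only even powers of `X`, so `Tr_{K/F} β = 0`. Writing `f = aX² + bX + c`, the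
substitution `y = (b/a) z` turns `f y = β` into the Artin–Schreier equation
`z² + z = a (β - c) / b²`, whose right side has trace zero over `F`, hence over `𝔽₂`. Since
`z ↦ z² + z` is `𝔽₂`-linear with kernel `𝔽₂`, its image is exactly the kernel of the absolute trace,
so the equation is solvable in `K` (if `b = 0`, take a square root instead). Then `y ∈ K` is a root
of `f ∘ f ∘ f`, whose degree 8 exceeds `[K : F] = 4`, so `f ∘ f ∘ f` is reducible.
-/

open Polynomial

section ArtinSchreier

variable (K : Type*) [Field K] [Algebra (ZMod 2) K]

noncomputable def artinSchreierMap : K →ₗ[ZMod 2] K where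
  toFun z := z ^ 2 + z
  map_add' x y := by
    have : CharP K 2 := charP_of_injective_algebraMap' (ZMod 2) 2
    rw [CharTwo.add_sq]
    ring
  map_smul' r x := by
    simp only [Algebra.smul_def, RingHom.id_apply, mul_pow, ← map_pow, ZMod.pow_card, mul_add]

variable {K}

theorem artinSchreierMap_apply (z : K) : artinSchreierMap K z = z ^ 2 + z := rfl

theorem ker_artinSchreierMap_le :
    LinearMap.ker (artinSchreierMap K) ≤ Submodule.span (ZMod 2) {1} := by
  intro z hz
  have : CharP K 2 := charP_of_injective_algebraMap' (ZMod 2) 2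
  have hz : z * (z - 1) = 0 := by
    rw [LinearMap.mem_ker, artinSchreierMap_apply] at hz
    linear_combination hz - z * CharTwo.two_eq_zero (R := K)
  rcases mul_eq_zero.mp hz with rfl | h
  · exact zero_mem _
  · rw [sub_eq_zero.mp h]
    exact Submodule.mem_span_singleton_self 1

variable [Finite K]

theorem trace_sq_eq_trace (z : K) :
    Algebra.trace (ZMod 2) K (z ^ 2) = Algebra.trace (ZMod 2) K z := by
  simpa [ZMod.card] using
    Algebra.trace_eq_of_algEquiv (FiniteField.frobeniusAlgEquivOfAlgebraic (ZMod 2) K) z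

theorem range_artinSchreierMap :
    LinearMap.range (artinSchreierMap K) = LinearMap.ker (Algebra.trace (ZMod 2) K) := by
  have hle : LinearMap.range (artinSchreierMap K) ≤ LinearMap.ker (Algebra.trace (ZMod 2) K) := by
    rintro _ ⟨z, rfl⟩
    rw [LinearMap.mem_ker, artinSchreierMap_apply, map_add, trace_sq_eq_trace,
      CharTwo.add_self_eq_zero]
  refine Submodule.eq_of_le_of_finrank_le hle ?_
  have hker : Module.finrank (ZMod 2) (LinearMap.ker (artinSchreierMap K)) ≤ 1 :=
    (Submodule.finrank_mono ker_artinSchreierMap_le).trans (finrank_span_singleton one_ne_zero).le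
  have htrace : Module.finrank (ZMod 2) (LinearMap.ker (Algebra.trace (ZMod 2) K)) <
      Module.finrank (ZMod 2) K :=
    Submodule.finrank_lt (by rw [Ne, LinearMap.ker_eq_top]; exact Algebra.trace_ne_zero _ _)
  have := LinearMap.finrank_range_add_finrank_ker (artinSchreierMap K)
  omega

end ArtinSchreier

theorem exists_sq_add_self_eq_of_trace_eq_zero {F K : Type*} [Field F] [CharP F 2] [Field K]
    [Finite K] [Algebra F K] {u : K} (hu : Algebra.trace F K u = 0) : ∃ z : K, z ^ 2 + z = u := by
  let := ZMod.algebra F 2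
  have : CharP K 2 := charP_of_injective_algebraMap (algebraMap F K).injective 2
  let := ZMod.algebra K 2
  have : IsScalarTower (ZMod 2) F K := IsScalarTower.of_algebraMap_eq' (Subsingleton.elim _ _)
  have : Finite F := Finite.of_injective _ (algebraMap F K).injective
  have hu₂ : u ∈ LinearMap.ker (Algebra.trace (ZMod 2) K) := by
    rw [LinearMap.mem_ker, ← Algebra.trace_trace (S := F), hu, map_zero]
  rw [← range_artinSchreierMap] at hu₂
  exact hu₂

namespace Polynomial

theorem coeff_pow_char_eq_zero {R : Type*} [CommSemiring R] (p : ℕ) [hp : Fact p.Prime]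
    [CharP R p] (f : R[X]) {n : ℕ} (hn : ¬ p ∣ n) : (f ^ p).coeff n = 0 := by
  rw [← map_frobenius_expand, coeff_map, coeff_expand hp.out.pos, if_neg hn, map_zero]

theorem coeff_comp_self_three {R : Type*} [CommSemiring R] [CharP R 2] {f : R[X]}
    (hf : f.natDegree ≤ 2) : (f.comp f).coeff 3 = 0 := by
  have hq := eq_quadratic_of_degree_le_two (natDegree_le_iff_degree_le.mp hf)
  have hcomp : f.comp f = C (f.coeff 2) * f ^ 2 + C (f.coeff 1) * f + C (f.coeff 0) := by
    nth_rewrite 1 [hq]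
    simp only [add_comp, mul_comp, C_comp, pow_comp, X_comp]
  rw [hcomp, coeff_add, coeff_add, coeff_C_mul, coeff_C_mul, coeff_C,
    coeff_pow_char_eq_zero 2 f (by decide), coeff_eq_zero_of_natDegree_lt (n := 3) (by omega)]
  simp

end Polynomial

theorem AdjoinRoot.trace_root {F : Type*} [Field F] {g : F[X]} [Fact (Irreducible g)] :
    Algebra.trace F (AdjoinRoot g) (root g) = -g.nextCoeff * g.leadingCoeff⁻¹ := by
  have hg : g ≠ 0 := (Fact.out : Irreducible g).ne_zero
  rw [← powerBasis_gen hg, PowerBasis.trace_gen_eq_nextCoeff_minpoly, powerBasis_gen hg,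
    minpoly_root hg, nextCoeff_mul_C, neg_mul]

theorem Irreducible.natDegree_le_finrank {F K : Type*} [Field F] [Ring K] [Nontrivial K]
    [Algebra F K] [Module.Finite F K] {p : F[X]} (hp : Irreducible p) {x : K}
    (hx : aeval x p = 0) : p.natDegree ≤ Module.finrank F K := by
  rw [← natDegree_mul_C (inv_ne_zero (leadingCoeff_ne_zero.mpr hp.ne_zero)),
    minpoly.eq_of_irreducible hp hx]
  exact minpoly.natDegree_le x

theorem exists_aeval_eq_of_trace_eq_zero {F K : Type*} [Field F] [CharP F 2] [Field K] [Finite K]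
    [Algebra F K] {f : F[X]} (hf : f.natDegree = 2) (hK : Even (Module.finrank F K)) {β : K}
    (hβ : Algebra.trace F K β = 0) : ∃ y : K, aeval y f = β := by
  have : CharP K 2 := charP_of_injective_algebraMap (algebraMap F K).injective 2
  obtain ⟨a, b, c, ha, rfl⟩ : ∃ a b c : F, a ≠ 0 ∧ f = C a * X ^ 2 + C b * X + C c :=
    ⟨_, _, _, by simpa [← hf] using ne_zero_of_natDegree_gt (n := 0) (by omega),
      eq_quadratic_of_degree_le_two (natDegree_le_iff_degree_le.mp hf.le)⟩
  have ha' : algebraMap F K a ≠ 0 := by rwa [ne_eq, map_eq_zero_iff _ (algebraMap F K).injective]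
  simp only [map_add, map_mul, aeval_C, aeval_X, map_pow]
  by_cases hb : b = 0
  · obtain ⟨y, hy⟩ := surjective_frobenius K 2 ((β - algebraMap F K c) / algebraMap F K a)
    refine ⟨y, ?_⟩
    rw [frobenius_def] at hy
    rw [hy, hb, map_zero]
    field_simp
    ring
  · have hb' : algebraMap F K b ≠ 0 := by
      rwa [ne_eq, map_eq_zero_iff _ (algebraMap F K).injective]
    have htrace : Algebra.trace F K (algebraMap F K (a / b ^ 2) * (β - algebraMap F K c)) = 0 := by
      have hc : Module.finrank F K • c = 0 := by
        rw [nsmul_eq_mul, (CharP.cast_eq_zero_iff F 2 _).mpr hK.two_dvd, zero_mul]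
      rw [← Algebra.smul_def, map_smul, map_sub, hβ, Algebra.trace_algebraMap, hc, sub_zero,
        smul_zero]
    obtain ⟨z, hz⟩ := exists_sq_add_self_eq_of_trace_eq_zero htrace
    refine ⟨algebraMap F K (b / a) * z, ?_⟩
    simp only [map_div₀, map_pow] at hz ⊢
    field_simp at hz ⊢
    linear_combination hz

theorem Polynomial.not_irreducible_comp_comp_self {F : Type*} [Field F] [Finite F] [CharP F 2]
    {f : F[X]} (hf : f.natDegree = 2) (h : Irreducible (f.comp f)) :
    ¬ Irreducible ((f.comp f).comp f) := by
  have := Fact.mk h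
  let pb := AdjoinRoot.powerBasis h.ne_zero
  have : Module.Finite F (AdjoinRoot (f.comp f)) := pb.finite
  have : Finite (AdjoinRoot (f.comp f)) := Module.finite_of_finite F
  have hdeg : (f.comp f).natDegree = 4 := by rw [natDegree_comp, hf]
  have hrank : Module.finrank F (AdjoinRoot (f.comp f)) = 4 := by
    rw [pb.finrank, AdjoinRoot.powerBasis_dim, hdeg]
  have htrace : Algebra.trace F _ (AdjoinRoot.root (f.comp f)) = 0 := by
    rw [AdjoinRoot.trace_root, nextCoeff_of_natDegree_pos (by omega), hdeg, Nat.add_one_sub_one,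
      coeff_comp_self_three hf.le, neg_zero, zero_mul]
  obtain ⟨y, hy⟩ := exists_aeval_eq_of_trace_eq_zero hf (by rw [hrank]; decide) htrace
  intro h3
  have := h3.natDegree_le_finrank (x := y)
    (by rw [aeval_comp, hy, AdjoinRoot.aeval_eq, AdjoinRoot.mk_self])
  rw [natDegree_comp, hdeg, hf, hrank] at this
  omega

/-- Over a finite field of characteristic 2 there is no dynamically irreducible
quadratic polynomial. -/
theorem stmt_2 (F : Type*) [Field F] [Fintype F] [CharP F 2]
    (f : F[X]) (hf : f.natDegree = 2) :
    ∃ n : ℕ, 1 ≤ n ∧ ¬ Irreducible ((fun p => f.comp p)^[n] X) := by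
  by_cases h : Irreducible (f.comp f)
  · exact ⟨3, by norm_num, by simpa [comp_assoc] using not_irreducible_comp_comp_self hf h⟩
  · exact ⟨2, by norm_num, by simpa using h⟩
end

section
/- Let q be an odd prime power and f(X) = aX² + bX + c ∈ F_q[X] with a ≠ 0, and let γ = -b/(2a) be the unique critical point of f. Suppose g ∈ F_q[X] is such that g ∘ f^(n-1) has degree d, leading coefficient e, and is irreducible over F_q, for some n ≥ 1. Then g ∘ f^(n) is irreducible over F_q if and only if (-a)^d · g(f^(n)(γ))/e is a non-square in F_q. -/
/-!
Let `β` be a root of the irreducible polynomial `h = g ∘ f^(n-1)` of degree `d`, so that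
`K = F(β)` has `q^d` elements. A root of `h ∘ f` generates an extension of degree at most two
of a copy of `K`, hence `h ∘ f` is irreducible iff `f(x) = β` has no solution `x ∈ K`, i.e. iff
the discriminant `4a(β - f(γ))` of `f - β` is a non-square in `K`. In a finite field extension of
odd characteristic an element is a square iff its norm is, and
`N_{K/F}(a(β - f(γ))) = (-a)^d h(f(γ)) / e`.
-/

open Polynomial

theorem minpoly.natDegree_eq_of_irreducible {K B : Type*} [Field K] [Ring B] [Algebra K B]
    [Nontrivial B] {p : K[X]} (hp : Irreducible p) {x : B} (hx : Polynomial.aeval x p = 0) :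
    (minpoly K x).natDegree = p.natDegree := by
  rw [← minpoly.eq_of_irreducible hp hx,
    natDegree_mul_C (inv_ne_zero (leadingCoeff_ne_zero.mpr hp.ne_zero))]

theorem PowerBasis.norm_algebraMap_sub_gen {R S : Type*} [CommRing R] [CommRing S] [Algebra R S]
    (pb : PowerBasis R S) (z : R) :
    Algebra.norm R (algebraMap R S z - pb.gen) = (minpoly R pb.gen).eval z := by
  rw [Algebra.norm_eq_matrix_det pb.basis, map_sub, AlgHom.commutes, ← charpoly_leftMulMatrix,
    Matrix.eval_charpoly, Matrix.algebraMap_eq_diagonal]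
  rfl

namespace AdjoinRoot

variable {K : Type*} [Field K] {h : K[X]}

theorem finrank_eq_natDegree : Module.finrank K (AdjoinRoot h) = h.natDegree :=
  finrank_quotient_span_eq_natDegree

theorem finiteDimensional (hh : h ≠ 0) : FiniteDimensional K (AdjoinRoot h) :=
  (powerBasis hh).finite

theorem norm_algebraMap_sub_root (hh : h ≠ 0) (z : K) :
    Algebra.norm K (algebraMap K (AdjoinRoot h) z - root h) = h.eval z / h.leadingCoeff := by
  rw [← powerBasis_gen hh, PowerBasis.norm_algebraMap_sub_gen, minpoly_powerBasis_gen hh,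
    eval_mul, eval_C, div_eq_mul_inv]

end AdjoinRoot

theorem isSquare_sq_mul_iff {K : Type*} [Field K] {u : K} (hu : u ≠ 0) (t : K) :
    IsSquare (u ^ 2 * t) ↔ IsSquare t :=
  ⟨fun h => by simpa [hu] using h.div (IsSquare.sq u), (IsSquare.sq u).mul⟩

theorem exists_quadratic_eq_zero_iff_isSquare_discrim {K : Type*} [Field K] [NeZero (2 : K)]
    {a b c : K} (ha : a ≠ 0) :
    (∃ x, a * (x * x) + b * x + c = 0) ↔ IsSquare (discrim a b c) := by
  refine ⟨fun ⟨x, hx⟩ => ⟨2 * a * x + b, ?_⟩, exists_quadratic_eq_zero ha⟩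
  rw [discrim_eq_sq_of_quadratic_eq_zero hx, sq]

theorem FiniteField.isSquare_norm_iff {K L : Type*} [Field K] [Field L] [Fintype K] [Fintype L]
    [Algebra K L] (hK : ringChar K ≠ 2) (x : L) :
    IsSquare (Algebra.norm K x) ↔ IsSquare x := by
  rcases eq_or_ne x 0 with rfl | hx
  · simp
  have hL : ringChar L ≠ 2 := Algebra.ringChar_eq K L ▸ hK
  obtain ⟨s, hs⟩ : Fintype.card K - 1 ∣ Fintype.card L - 1 := by
    simpa [← Module.card_eq_pow_finrank] using
      Nat.sub_dvd_pow_sub_pow (Fintype.card K) 1 (Module.finrank K L)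
  have hK1 : 0 < Fintype.card K - 1 := Nat.sub_pos_of_lt Fintype.one_lt_card
  have hexp : Fintype.card L / 2 = (Nat.card L - 1) / (Nat.card K - 1) * (Fintype.card K / 2) := by
    obtain ⟨k, hk⟩ := Nat.odd_iff.mpr (odd_card_of_char_ne_two hK)
    obtain ⟨l, hl⟩ := Nat.odd_iff.mpr (odd_card_of_char_ne_two hL)
    simp only [Nat.card_eq_fintype_card, hs, Nat.mul_div_cancel_left s hK1]
    rw [hk, hl, Nat.add_sub_cancel, Nat.add_sub_cancel, mul_assoc] at hs
    rw [hk, hl, Nat.eq_of_mul_eq_mul_left two_pos hs, show (2 * k + 1) / 2 = k by omega,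
      show (2 * (k * s) + 1) / 2 = k * s by omega, mul_comm]
  rw [isSquare_iff hK (Algebra.norm_ne_zero_iff.mpr hx), isSquare_iff hL hx, hexp, pow_mul,
    ← algebraMap_norm_eq_pow, ← map_pow (algebraMap K L),
    map_eq_one_iff _ (algebraMap K L).injective]

namespace Polynomial

theorem iterate_comp_apply {R : Type*} [CommSemiring R] (f p : R[X]) (m : ℕ) :
    (f.comp ·)^[m] p = ((f.comp ·)^[m] X).comp p := by
  induction m with
  | zero => simp
  | succ m ih => simp only [Function.iterate_succ_apply', ih, comp_assoc]

variable {K : Type*} [Field K] {h f P : K[X]}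

theorem not_irreducible_comp_of_aeval_eq_root (hh : Irreducible h) (hf : 1 < f.natDegree)
    {x : AdjoinRoot h} (hx : aeval x f = AdjoinRoot.root h) : ¬Irreducible (h.comp f) := by
  have := Fact.mk hh
  have := AdjoinRoot.finiteDimensional hh.ne_zero
  intro hirr
  have hdeg := minpoly.natDegree_le (A := K) x
  rw [minpoly.natDegree_eq_of_irreducible hirr (by rw [aeval_comp, hx, AdjoinRoot.aeval_eq,
    AdjoinRoot.mk_self]), natDegree_comp, AdjoinRoot.finrank_eq_natDegree] at hdeg
  nlinarith [hh.natDegree_pos]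

theorem aeval_aeval_root_eq_zero_of_dvd_comp (hPf : P ∣ h.comp f) :
    aeval (aeval (AdjoinRoot.root P) f) h = 0 := by
  rw [← aeval_comp]
  exact aeval_eq_zero_of_dvd_aeval_eq_zero hPf (by rw [AdjoinRoot.aeval_eq, AdjoinRoot.mk_self])

theorem natDegree_dvd_of_dvd_comp (hh : Irreducible h) (hP : Irreducible P) (hPf : P ∣ h.comp f) :
    h.natDegree ∣ P.natDegree := by
  have := Fact.mk hP
  have := AdjoinRoot.finiteDimensional hP.ne_zero
  rw [← minpoly.natDegree_eq_of_irreducible hh (aeval_aeval_root_eq_zero_of_dvd_comp hPf),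
    ← AdjoinRoot.finrank_eq_natDegree (h := P)]
  exact minpoly.degree_dvd (.of_finite K _)

theorem exists_aeval_eq_root_of_dvd_comp (hh : Irreducible h) (hP : Irreducible P)
    (hPf : P ∣ h.comp f) (hdeg : P.natDegree = h.natDegree) :
    ∃ x : AdjoinRoot h, aeval x f = AdjoinRoot.root h := by
  have := Fact.mk hh
  have := Fact.mk hP
  have := AdjoinRoot.finiteDimensional hh.ne_zero
  have := AdjoinRoot.finiteDimensional hP.ne_zero
  let ψ := AdjoinRoot.liftAlgHom h (Algebra.ofId K (AdjoinRoot P)) _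
    (aeval_aeval_root_eq_zero_of_dvd_comp hPf)
  have hψ : Function.Surjective ψ :=
    (LinearMap.injective_iff_surjective_of_finrank_eq_finrank (f := ψ.toLinearMap)
      (by rw [AdjoinRoot.finrank_eq_natDegree, AdjoinRoot.finrank_eq_natDegree, hdeg])).mp
      ψ.toRingHom.injective
  obtain ⟨x, hx⟩ := hψ (AdjoinRoot.root P)
  refine ⟨x, ψ.toRingHom.injective ?_⟩
  change ψ _ = ψ _
  rw [← aeval_algHom_apply, hx]
  exact (AdjoinRoot.liftAlgHom_root ..).symm

theorem irreducible_comp_iff_forall_aeval_ne_root (hh : Irreducible h) (hf : f.natDegree = 2) :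
    Irreducible (h.comp f) ↔ ∀ x : AdjoinRoot h, aeval x f ≠ AdjoinRoot.root h := by
  refine ⟨fun hirr x hx => not_irreducible_comp_of_aeval_eq_root hh (by omega) hx hirr,
    fun hno => ?_⟩
  have hd := hh.natDegree_pos
  have hdeg : (h.comp f).natDegree = h.natDegree * 2 := by rw [natDegree_comp, hf]
  have hne : h.comp f ≠ 0 := ne_zero_of_natDegree_gt (n := 0) (by omega)
  obtain ⟨P, hP, hPf⟩ := WfDvdMonoid.exists_irreducible_factor
    (not_isUnit_of_natDegree_pos _ (by omega)) hne
  obtain ⟨m, hm⟩ := natDegree_dvd_of_dvd_comp hh hP hPf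
  have hle := natDegree_le_of_dvd hPf hne
  have hm2 : m ≤ 2 := Nat.le_of_mul_le_mul_left (by omega) hd
  have hm0 := hP.natDegree_pos
  interval_cases m
  · omega
  · obtain ⟨x, hx⟩ := exists_aeval_eq_root_of_dvd_comp hh hP hPf (by omega)
    exact absurd hx (hno x)
  · exact (associated_of_dvd_of_natDegree_le hPf hne (by omega)).irreducible hP

theorem irreducible_comp_quadratic_iff {F : Type*} [Field F] [Fintype F] (hF : ringChar F ≠ 2)
    {a b c : F} (ha : a ≠ 0) {h : F[X]} (hh : Irreducible h) :
    Irreducible (h.comp (C a * X ^ 2 + C b * X + C c)) ↔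
      ¬IsSquare ((-a) ^ h.natDegree *
        h.eval ((C a * X ^ 2 + C b * X + C c).eval (-b / (2 * a))) / h.leadingCoeff) := by
  have := Fact.mk hh
  have := AdjoinRoot.finiteDimensional hh.ne_zero
  have : Finite (AdjoinRoot h) := Module.finite_of_finite F
  let := Fintype.ofFinite (AdjoinRoot h)
  set z := (C a * X ^ 2 + C b * X + C c).eval (-b / (2 * a))
  set φ := algebraMap F (AdjoinRoot h)
  set β := AdjoinRoot.root h
  have h2 : (2 : F) ≠ 0 := Ring.two_ne_zero hF
  have : NeZero (2 : AdjoinRoot h) := ⟨by rw [← map_ofNat φ 2]; exact (_root_.map_ne_zero φ).mpr h2⟩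
  have hz : 4 * a * z = 4 * a * c - b ^ 2 := by
    simp only [z, eval_add, eval_mul, eval_pow, eval_C, eval_X]
    field_simp
    ring
  have hdisc : discrim (φ a) (φ b) (φ c - β) = 2 ^ 2 * (φ (-a) * (φ z - β)) := by
    have := congrArg φ hz
    simp only [map_mul, map_sub, map_pow, map_ofNat] at this
    rw [discrim, map_neg]
    linear_combination this
  have hnorm : Algebra.norm F (φ (-a) * (φ z - β)) =
      (-a) ^ h.natDegree * h.eval z / h.leadingCoeff := by
    rw [map_mul, Algebra.norm_algebraMap, AdjoinRoot.finrank_eq_natDegree,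
      AdjoinRoot.norm_algebraMap_sub_root hh.ne_zero, mul_div_assoc]
  rw [irreducible_comp_iff_forall_aeval_ne_root hh (natDegree_quadratic ha), ← hnorm,
    FiniteField.isSquare_norm_iff hF, ← isSquare_sq_mul_iff two_ne_zero, ← hdisc,
    ← exists_quadratic_eq_zero_iff_isSquare_discrim ((_root_.map_ne_zero φ).mpr ha), not_exists]
  refine forall_congr' fun x => not_congr ?_
  simp only [map_add, map_mul, map_pow, aeval_C, aeval_X]
  constructor <;> intro hx <;> linear_combination hx

end Polynomial

/-- Jones–Boston criterion: with `f = aX²+bX+c`, `γ = -b/(2a)`, if `g ∘ f^(n-1)` has degree `d`,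
leading coefficient `e`, and is irreducible, then `g ∘ f^(n)` is irreducible iff
`(-a)^d · g(f^(n)(γ))/e` is a non-square. -/
theorem stmt_4 (F : Type*) [Field F] [Fintype F] (hodd : Odd (Fintype.card F))
    (a b c : F) (ha : a ≠ 0) (g : F[X]) (n d : ℕ) (hn : 1 ≤ n) (e : F)
    (hd : (g.comp ((fun p => (C a * X ^ 2 + C b * X + C c : F[X]).comp p)^[n - 1] X)).natDegree = d)
    (he : (g.comp ((fun p => (C a * X ^ 2 + C b * X + C c : F[X]).comp p)^[n - 1] X)).leadingCoeff = e)
    (hirr : Irreducible (g.comp ((fun p => (C a * X ^ 2 + C b * X + C c : F[X]).comp p)^[n - 1] X))) :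
    Irreducible (g.comp ((fun p => (C a * X ^ 2 + C b * X + C c : F[X]).comp p)^[n] X)) ↔
      ¬ IsSquare ((-a) ^ d *
        g.eval (((fun p => (C a * X ^ 2 + C b * X + C c : F[X]).comp p)^[n] X).eval
          (-b / (2 * a))) / e) := by
  obtain ⟨m, rfl⟩ := Nat.exists_eq_add_of_le' hn
  subst hd he
  have hF : ringChar F ≠ 2 := by
    simpa [FiniteField.even_card_iff_char_two, Nat.odd_iff] using hodd
  rw [Nat.add_sub_cancel] at hirr ⊢
  rw [Function.iterate_succ_apply, comp_X, iterate_comp_apply, ← comp_assoc, eval_comp,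
    ← eval_comp]
  exact irreducible_comp_quadratic_iff hF ha hirr
end

section
/- Let F_q be a finite field in which -1 is a square (e.g., characteristic p ≡ 1 mod 4, or q an even power of p). Fix b ∈ F_q*. For a ∈ F_q*, let f_a(X) = a(X - b)² + b. Then the set F = { f_a : a ∈ F_q*, a·b is a non-square in F_q } has cardinality (q-1)/2 and is dynamically irreducible: every composition f_{a_{i_1}} ∘ ... ∘ f_{a_{i_n}} of members of F is irreducible over F_q. -/
/-!
A composition of `n` maps `f_a = a(X - b)² + b` is again of the shape `A(X - b)^(2ⁿ) + b`, where
`A` is the leading coefficient of the outermost map times a nonzero square, so `Ab` is still a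
non-square. After the shift `X ↦ X + b` such a polynomial is `A(X^(2ⁿ) - c)` with `c = -b/A`, a
non-square because `-1` is a square, and `X^(2ⁿ) - c` is irreducible by induction on `n`: the
norm from `K(√c)` carries `√c` to `-c`, so `√c` is again a non-square there. The count is that of
the non-squares of `F_q`, which multiplication by a fixed non-square exchanges with the nonzero
squares.
-/

open Polynomial IntermediateField

namespace FiniteField

variable {F : Type*} [Field F] [Fintype F]

theorem ncard_setOf_not_isSquare (hF : ringChar F ≠ 2) :
    {x : F | ¬IsSquare x}.ncard = (Fintype.card F - 1) / 2 := by
  classical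
  obtain ⟨u, hu⟩ := quadraticChar_exists_neg_one hF
  have hu0 : u ≠ 0 := by rintro rfl; simp at hu
  have hswap (ε : ℤ) :
      {x : F | quadraticChar F x = ε}.ncard ≤ {x : F | quadraticChar F x = -ε}.ncard :=
    Set.ncard_le_ncard_of_injOn (u * ·)
      (fun x (hx : quadraticChar F x = ε) ↦ show quadraticChar F (u * x) = -ε by
        rw [map_mul, hu, hx, neg_one_mul])
      (mul_right_injective₀ hu0).injOn
  have hunion : {x : F | quadraticChar F x = -1} ∪ {x | quadraticChar F x = 1} = {0}ᶜ := by
    ext x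
    rcases eq_or_ne x 0 with rfl | hx
    · simp
    · simpa [hx, or_comm] using quadraticChar_dichotomy hx
  have hcard := Set.ncard_union_eq (s := {x : F | quadraticChar F x = -1})
    (t := {x | quadraticChar F x = 1}) (Set.disjoint_left.mpr fun x h₁ h₂ ↦ by
      rw [Set.mem_ofPred_eq] at h₁ h₂; omega)
  rw [hunion, Set.ncard_compl, Set.ncard_singleton, Nat.card_eq_fintype_card] at hcard
  have h₁ := hswap 1
  have h₂ := hswap (-1)
  simp only [neg_neg, quadraticChar_neg_one_iff_not_isSquare] at h₁ h₂ hcard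
  omega

theorem ncard_setOf_not_isSquare_mul (hF : ringChar F ≠ 2) {b : F} (hb : b ≠ 0) :
    {a : F | ¬IsSquare (a * b)}.ncard = (Fintype.card F - 1) / 2 := by
  rw [← ncard_setOf_not_isSquare hF]
  exact Set.ncard_preimage_of_injective_subset_range (s := {x | ¬IsSquare x})
    (mul_left_injective₀ hb) fun x _ ↦ ⟨x / b, div_mul_cancel₀ x hb⟩

end FiniteField

theorem not_isSquare_mul_sq_iff {K : Type*} [Field K] {x s : K} (hs : s ≠ 0) :
    ¬IsSquare (x * s ^ 2) ↔ ¬IsSquare x := by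
  refine not_congr ⟨fun ⟨t, ht⟩ ↦ ⟨t / s, ?_⟩, fun ⟨t, ht⟩ ↦ ⟨t * s, by rw [ht]; ring⟩⟩
  field_simp
  linear_combination ht

theorem X_pow_two_pow_sub_C_irreducible_of_isSquare_neg_one {K : Type*} [Field K]
    (hK : IsSquare (-1 : K)) (n : ℕ) {a : K} (ha : ¬IsSquare a) :
    Irreducible (X ^ 2 ^ n - C a) := by
  induction n generalizing K a with
  | zero => simpa using irreducible_X_sub_C a
  | succ n ih =>
    rw [pow_succ]
    refine X_pow_mul_sub_C_irreducible
      (X_pow_sub_C_irreducible_of_prime Nat.prime_two fun t ht ↦ ha ⟨t, by rw [← ht, sq]⟩) ?_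
    intro E _ _ x hx
    have hint : IsIntegral K x := not_not.mp fun h ↦ by
      simpa only [degree_zero, degree_X_pow_sub_C two_pos, WithBot.natCast_ne_bot]
        using congr_arg degree (hx.symm.trans (dif_neg h))
    obtain ⟨i, hi⟩ := hK
    refine ih ⟨algebraMap K K⟮x⟯ i, by rw [← map_mul, ← hi, map_neg, map_one]⟩ ?_
    rintro ⟨t, ht⟩
    -- a square root `t` of `x` would give `-a = N(x) = N(t)²`, and `-1` is a square
    have hnorm : Algebra.norm K (AdjoinSimple.gen K x) = -a := by
      rw [← adjoin.powerBasis_gen hint, Algebra.PowerBasis.norm_gen_eq_coeff_zero_minpoly]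
      simp [minpoly_gen, hx]
    rw [ht, map_mul] at hnorm
    exact ha ⟨i * Algebra.norm K t, by linear_combination (Algebra.norm K t) ^ 2 * hi + hnorm⟩

theorem Irreducible.comp_X_sub_C {R : Type*} [CommRing R] {p : R[X]} (hp : Irreducible p)
    (r : R) : Irreducible (p.comp (X - C r)) := by
  convert hp.map (taylorEquiv (-r)) using 1
  rw [← AlgEquiv.coe_toAlgHom, toAlgHom_taylorEquiv]
  simp only [taylorAlgHom_apply, taylor_apply, map_neg, sub_eq_add_neg]

theorem comp_C_mul_X_sub_C_pow_add_C {R : Type*} [CommRing R] (a A b : R) (m k : ℕ) :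
    (C a * (X - C b) ^ m + C b).comp (C A * (X - C b) ^ k + C b) =
      C (a * A ^ m) * (X - C b) ^ (k * m) + C b := by
  simp only [add_comp, mul_comp, pow_comp, sub_comp, X_comp, C_comp, C_mul, C_pow]
  ring

theorem irreducible_C_mul_X_sub_C_pow_two_pow_add_C {K : Type*} [Field K]
    (hK : IsSquare (-1 : K)) {A b : K} (hAb : ¬IsSquare (A * b)) (n : ℕ) :
    Irreducible (C A * (X - C b) ^ 2 ^ n + C b) := by
  have hA : A ≠ 0 := by rintro rfl; simp at hAb
  have hc : ¬IsSquare (-b / A) := by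
    rintro ⟨t, ht⟩
    obtain ⟨i, hi⟩ := hK
    rw [div_eq_iff hA] at ht
    exact hAb ⟨i * t * A, by linear_combination (-A) * ht + (t * t * A * A) * hi⟩
  have heq : C A * (X - C b) ^ 2 ^ n + C b = C A * (X ^ 2 ^ n - C (-b / A)).comp (X - C b) := by
    simp only [sub_comp, pow_comp, X_comp, C_comp, mul_sub, ← C_mul, mul_div_cancel₀ _ hA,
      C_neg, sub_neg_eq_add]
  rw [heq, irreducible_isUnit_mul (isUnit_C.mpr hA.isUnit)]
  exact (X_pow_two_pow_sub_C_irreducible_of_isSquare_neg_one hK n hc).comp_X_sub_C b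

theorem exists_foldr_comp_eq_C_mul_X_sub_C_pow_add_C {K : Type*} [Field K] {b : K}
    {l : List K[X]} (hl : l ≠ [])
    (hmem : ∀ p ∈ l, ∃ a : K, ¬IsSquare (a * b) ∧ p = C a * (X - C b) ^ 2 + C b) :
    ∃ A : K, ¬IsSquare (A * b) ∧
      l.foldr (·.comp ·) X = C A * (X - C b) ^ 2 ^ l.length + C b := by
  induction l with
  | nil => exact absurd rfl hl
  | cons p l ih =>
    obtain ⟨a, hab, rfl⟩ := hmem p List.mem_cons_self
    rcases eq_or_ne l [] with rfl | hl
    · exact ⟨a, hab, by simp⟩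
    obtain ⟨A, hAb, hA⟩ := ih hl fun q hq ↦ hmem q (List.mem_cons_of_mem _ hq)
    have hA0 : A ≠ 0 := by rintro rfl; simp at hAb
    refine ⟨a * A ^ 2, ?_, ?_⟩
    · rwa [mul_right_comm, not_isSquare_mul_sq_iff hA0]
    · rw [List.foldr_cons, hA, comp_C_mul_X_sub_C_pow_add_C, List.length_cons, pow_succ 2 l.length]

/-- If `-1` is a square in `F_q` and `b ≠ 0`, then the family
`{f_a = a(X-b)² + b : ab a non-square}` has `(q-1)/2` members and is dynamically irreducible. -/
theorem stmt_7 (F : Type*) [Field F] [Fintype F] (hodd : Odd (Fintype.card F))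
    (hneg : IsSquare (-1 : F)) (b : F) (hb : b ≠ 0) :
    ({p : F[X] | ∃ a : F, a ≠ 0 ∧ ¬ IsSquare (a * b) ∧
        p = C a * (X - C b) ^ 2 + C b}).ncard = (Fintype.card F - 1) / 2 ∧
    ∀ l : List F[X], l ≠ [] →
      (∀ p ∈ l, ∃ a : F, a ≠ 0 ∧ ¬ IsSquare (a * b) ∧ p = C a * (X - C b) ^ 2 + C b) →
      Irreducible (l.foldr (·.comp ·) X) := by
  have hF : ringChar F ≠ 2 := by
    rw [Ne, FiniteField.even_card_iff_char_two, ← Nat.even_iff, Nat.not_even_iff_odd]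
    exact hodd
  refine ⟨?_, fun l hl hmem ↦ ?_⟩
  · have hinj : Function.Injective fun a : F ↦ C a * (X - C b) ^ 2 + C b := fun a₁ a₂ h ↦
      C_injective (mul_right_cancel₀ (pow_ne_zero 2 (X_sub_C_ne_zero b)) (add_right_cancel h))
    have hset : {p : F[X] | ∃ a : F, a ≠ 0 ∧ ¬ IsSquare (a * b) ∧
        p = C a * (X - C b) ^ 2 + C b} =
        (fun a : F ↦ C a * (X - C b) ^ 2 + C b) '' {a | ¬IsSquare (a * b)} := by
      ext p
      refine ⟨fun ⟨a, _, hab, hp⟩ ↦ ⟨a, hab, hp.symm⟩, fun ⟨a, hab, hp⟩ ↦ ⟨a, ?_, hab, hp.symm⟩⟩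
      rintro rfl
      simp at hab
    rw [hset, Set.ncard_image_of_injective _ hinj, FiniteField.ncard_setOf_not_isSquare_mul hF hb]
  · obtain ⟨A, hAb, hfold⟩ :=
      exists_foldr_comp_eq_C_mul_X_sub_C_pow_add_C hl fun p hp ↦ (hmem p hp).imp fun _ h ↦ h.2
    rw [hfold]
    exact irreducible_C_mul_X_sub_C_pow_two_pow_add_C hneg hAb _
end
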